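/- arXiv:2506.09180 — 2 statements merged into one kernel-verified Lean document; each statement's English description precedes it below -/
import Mathlib

section
/- For every horizon T ≥ 1, every state s = (n_1,…,n_N), and every L with n_1 ≤ L and L + 2 ≤ |s|, one has F(s,L) + F(s,L+2) ≥ 2·F(s,L+1); that is, F(s,·) is a discrete convex function of L on the integer interval {n_1, n_1+1, …, |s|}. -/
open Finset

/-- System parameters: offloading cost, penalty cost, AMA probability,
local-processing probability, and arrival probabilities. -/
structure Params where
  Co : ℝ
  Cp : ℝ
  pa : ℝ
  mu : ℝ
  p : ℕ → ℝ

variable {N : ℕ}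

/-- Partial sum `S_j(s) = ∑_{i=1}^j n_i` (components of `s` are 0-indexed). -/
def S (s : Fin N → ℕ) (j : ℕ) : ℕ :=
  ∑ i ∈ Finset.univ.filter fun i : Fin N => (i : ℕ) < j, s i

/-- Total number of tasks `|s|`. -/
def tot (s : Fin N → ℕ) : ℕ := S s N

/-- The state obtained by offloading the `L` most imminent tasks of `s`:
`(s̄_L)_i = max(S_i(s) − L, 0) − max(S_{i−1}(s) − L, 0)` (truncated ℕ-subtraction). -/
def offload (s : Fin N → ℕ) (L : ℕ) : Fin N → ℕ :=
  fun i => (S s ((i : ℕ) + 1) - L) - (S s (i : ℕ) - L)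

/-- Deadline shifting: `shift(s) = (n_2, …, n_N, 0)`. -/
def shift (s : Fin N → ℕ) : Fin N → ℕ :=
  fun i => if h : (i : ℕ) + 1 < N then s ⟨(i : ℕ) + 1, h⟩ else 0

/-- Arrival vector `a_k`: the `k`-th standard unit vector for `1 ≤ k ≤ N`, zero for `k = 0`. -/
def avec (k : ℕ) : Fin N → ℕ := fun i => if (i : ℕ) + 1 = k then 1 else 0

/-- Local processing: remove one task of smallest deadline (identity on the zero state). -/
def proc (s : Fin N → ℕ) : Fin N → ℕ :=
  fun i => if s i ≠ 0 ∧ ∀ j : Fin N, j < i → s j = 0 then s i - 1 else s i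

/-- `s''_{Lk} = shift(s̄_L) + a_k`. -/
def sdd (s : Fin N → ℕ) (L k : ℕ) : Fin N → ℕ :=
  fun i => shift (offload s L) i + avec k i

/-- `s'_{Lk} = proc(s''_{Lk})`. -/
def sd (s : Fin N → ℕ) (L k : ℕ) : Fin N → ℕ := proc (sdd s L k)

/-- Instantaneous cost with the AMA: `𝒞^A(s,L) = C_o·L + C_p·max(n_1 − L, 0)`. -/
def costA (P : Params) (s : Fin N → ℕ) (L : ℕ) : ℝ :=
  P.Co * L + P.Cp * ((S s 1 - L : ℕ) : ℝ)

/-- Instantaneous cost without the AMA: `𝒞^Ā(s) = C_p·n_1`. -/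
def costNA (P : Params) (s : Fin N → ℕ) : ℝ := P.Cp * (S s 1 : ℕ)

/-- Expected instantaneous cost `𝒞(s,L)`. -/
def cost (P : Params) (s : Fin N → ℕ) (L : ℕ) : ℝ :=
  P.pa * costA P s L + (1 - P.pa) * costNA P s

/-- The dynamic-programming minimization, given the future-cost function `G`. -/
noncomputable def JofG (P : Params) (G : (Fin N → ℕ) → ℕ → ℝ) (s : Fin N → ℕ) : ℝ :=
  (Finset.range (tot s + 1)).inf' (Finset.nonempty_range_iff.mpr (Nat.succ_ne_zero _))
    fun L => cost P s L + P.pa * G s L + (1 - P.pa) * G s 0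

/-- `G^A_T(s,L)`, defined by recursion on the horizon `T`. -/
noncomputable def GA (P : Params) : ℕ → (Fin N → ℕ) → ℕ → ℝ
  | 0, _, _ => 0
  | T + 1, s, L =>
      P.mu * ∑ k ∈ Finset.range (N + 1), P.p k * JofG P (GA P T) (sd s L k)
        + (1 - P.mu) * ∑ k ∈ Finset.range (N + 1), P.p k * JofG P (GA P T) (sdd s L k)

/-- `J_T(s)` for horizon `T ≥ 1`. -/
noncomputable def J (P : Params) (T : ℕ) (s : Fin N → ℕ) : ℝ := JofG P (GA P (T - 1)) s

/-- `J^A_T(s,L) = 𝒞^A(s,L) + G^A_{T−1}(s,L)`. -/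
noncomputable def JA (P : Params) (T : ℕ) (s : Fin N → ℕ) (L : ℕ) : ℝ :=
  costA P s L + GA P (T - 1) s L

/-- `J^A_T(s) = min_{0 ≤ L ≤ |s|} J^A_T(s,L)`. -/
noncomputable def JAmin (P : Params) (T : ℕ) (s : Fin N → ℕ) : ℝ :=
  (Finset.range (tot s + 1)).inf' (Finset.nonempty_range_iff.mpr (Nat.succ_ne_zero _))
    (JA P T s)

/-- `J^Ā_T(s) = 𝒞^Ā(s) + G^A_{T−1}(s,0)`. -/
noncomputable def JNA (P : Params) (T : ℕ) (s : Fin N → ℕ) : ℝ :=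
  costNA P s + GA P (T - 1) s 0

/-- The optimal offloading decision: the smallest minimizer of `L ↦ J^A_T(s,L)`
over `{0,…,|s|}`. -/
noncomputable def Lstar (P : Params) (T : ℕ) (s : Fin N → ℕ) : ℕ :=
  sInf {L | L ≤ tot s ∧ ∀ L' ≤ tot s, JA P T s L ≤ JA P T s L'}

/-- The smallest deadline `d(s)` carried by a task of `s` (1-indexed). -/
noncomputable def dmin (s : Fin N → ℕ) : ℕ := sInf {j | 0 < S s j}

/-- `sa` is adjacent to `s`. -/
def Adjacent (s sa : Fin N → ℕ) : Prop :=
  (s ≠ 0 ∧ ∃ j, 1 ≤ j ∧ j ≤ dmin s ∧ sa = s + avec j) ∨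
    (s = 0 ∧ ∃ j, 1 ≤ j ∧ j ≤ N ∧ sa = avec j)

/-- `L_g`: the number of excessive tasks, `max_{1 ≤ j ≤ M} max(S_j(s) − (j−1), 0)`. -/
def Lg (s : Fin N → ℕ) (M : ℕ) : ℕ := (Finset.Icc 1 M).sup fun j => S s j - (j - 1)

/-- `Γ_j = ∑_{i=1}^j γ_i` for the parameters `γ` of Definition 2
(`γ_1 = 0`, `γ_j = min(n_j, j−1−∑_{i<j} γ_i)` for `2 ≤ j ≤ M`, `γ_j = 0` for `j > M`). -/
def Gam (s : Fin N → ℕ) (M : ℕ) : ℕ → ℕ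
  | 0 => 0
  | j + 1 =>
      if 2 ≤ j + 1 ∧ j + 1 ≤ M then
        Gam s M j + min (S s (j + 1) - S s j) (j - Gam s M j)
      else Gam s M j

/-- The lean state of `s`: `n^ℓ_i = max(γ_i, n^r_i)` where `s^r = s̄_{L_g}`. -/
def leanState (s : Fin N → ℕ) (M : ℕ) : Fin N → ℕ :=
  fun i => max (Gam s M ((i : ℕ) + 1) - Gam s M (i : ℕ)) (offload s (Lg s M) i)

/-- `F(s,L) = J^Ā_T(s̄_L) + L·C_o`. -/
noncomputable def F (P : Params) (T : ℕ) (s : Fin N → ℕ) (L : ℕ) : ℝ :=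
  JNA P T (offload s L) + L * P.Co

/-!
Encode a state by its vector of partial sums `S_1(s) ≤ ⋯ ≤ S_N(s)`. In these coordinates,
offloading `L` tasks subtracts `L` from every entry (clamping at `0`), an arrival adds a fixed
monotone `0/1` vector, and the deadline shift subtracts the first entry from the others. By
induction on the horizon, the expected future cost, as a function of the partial sums of the
post-decision state, is monotone, grows by at most `C_p` when one is added to every entry, and is
discretely midpoint convex: `g ⌈(A + B) / 2⌉ + g ⌊(A + B) / 2⌋ ≤ g A + g B`. These three properties
survive translations, clamping, the minimization over the number of offloaded tasks, the deadline
shift and expectations. For `L ≥ n₁` the partial sums of the state reached by offloading `L + 1`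
tasks are exactly the midpoint of those for `L` and `L + 2`, which gives the convexity of `F`.
-/

lemma S_zero (s : Fin N → ℕ) : S s 0 = 0 := by
  simp [S]

lemma S_succ (s : Fin N → ℕ) (j : ℕ) :
    S s (j + 1) = S s j + if h : j < N then s ⟨j, h⟩ else 0 := by
  unfold S
  split_ifs with h
  · have e : (univ.filter fun i : Fin N => (i : ℕ) < j + 1)
        = insert ⟨j, h⟩ (univ.filter fun i : Fin N => (i : ℕ) < j) := by
      ext i
      simp only [mem_filter, mem_univ, true_and, mem_insert, Fin.ext_iff]
      omega
    rw [e, sum_insert (by simp), add_comm]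
  · rw [add_zero]
    exact sum_congr (filter_congr fun i _ => by omega) fun _ _ => rfl

lemma S_mono (s : Fin N → ℕ) : Monotone (S s) := by
  intro a b h
  apply sum_le_sum_of_subset
  intro i
  simp only [mem_filter, mem_univ, true_and]
  omega

lemma S_le_tot (s : Fin N → ℕ) (j : ℕ) : S s j ≤ tot s := by
  unfold tot S
  apply sum_le_sum_of_subset
  intro i
  simp

lemma S_add (s t : Fin N → ℕ) (j : ℕ) : S (s + t) j = S s j + S t j :=
  sum_add_distrib

lemma S_offload (s : Fin N → ℕ) (L j : ℕ) : S (offload s L) j = S s j - L := by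
  induction j with
  | zero => simp [S_zero]
  | succ j ih =>
    have hle := S_mono s (Nat.le_add_right j 1)
    rw [S_succ, ih]
    split_ifs with h
    · simp only [offload]
      omega
    · rw [S_succ, dif_neg h]
      omega

lemma S_shift (s : Fin N → ℕ) (j : ℕ) : S (shift s) j = S s (min (j + 1) N) - S s 1 := by
  induction j with
  | zero =>
    have := S_mono s (min_le_left 1 N)
    rw [S_zero, zero_add]
    omega
  | succ j ih =>
    rw [S_succ, ih]
    simp only [shift]
    by_cases hj : j + 1 < N
    · have h1 := S_mono s (show 1 ≤ j + 1 by omega)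
      have h2 := S_succ s (j + 1)
      rw [dif_pos hj] at h2
      rw [dif_pos (by omega), dif_pos hj, min_eq_left (by omega : j + 1 ≤ N),
        min_eq_left (by omega : j + 1 + 1 ≤ N)]
      omega
    · rw [min_eq_right (by omega : N ≤ j + 1 + 1), min_eq_right (by omega : N ≤ j + 1)]
      split_ifs <;> simp

/-! ### Partial-sum coordinates -/

def partialSums (x : Fin N → ℕ) : Fin N → ℤ := fun i => S x (i + 1)

def ofPartialSums (A : Fin N → ℤ) : Fin N → ℕ := fun i =>
  (A i).toNat - if h : (i : ℕ) = 0 then 0 else (A ⟨i - 1, by omega⟩).toNat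

def succClamp (j : Fin N) : Fin N := ⟨min (j + 1) (N - 1), by have := j.isLt; omega⟩

lemma S_succ_fin (x : Fin N → ℕ) (i : Fin N) : S x (i + 1) = S x i + x i := by
  rw [S_succ, dif_pos i.isLt]

lemma partialSums_mono (x : Fin N → ℕ) : Monotone (partialSums x) :=
  fun _ _ h => Nat.cast_le.mpr (S_mono x (Nat.add_le_add_right h 1))

lemma partialSums_nonneg (x : Fin N → ℕ) (i : Fin N) : 0 ≤ partialSums x i :=
  Nat.cast_nonneg _

lemma S_eq_partialSums_pred (x : Fin N → ℕ) (i : Fin N) (hi : (i : ℕ) ≠ 0) :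
    (S x i : ℤ) = partialSums x ⟨i - 1, by omega⟩ := by
  simp only [partialSums, Nat.sub_add_cancel (Nat.one_le_iff_ne_zero.mpr hi)]

lemma partialSums_injective : Function.Injective (partialSums (N := N)) := by
  intro x y h
  funext i
  have hx := S_succ_fin x i
  have hy := S_succ_fin y i
  have hi := congrFun h i
  simp only [partialSums] at hi
  by_cases h0 : (i : ℕ) = 0
  · have h0x : S x i = 0 := by rw [h0, S_zero]
    have h0y : S y i = 0 := by rw [h0, S_zero]
    omega
  · have := S_eq_partialSums_pred x i h0
    have := S_eq_partialSums_pred y i h0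
    have := congrFun h ⟨i - 1, by omega⟩
    omega

lemma partialSums_add (x y : Fin N → ℕ) : partialSums (x + y) = partialSums x + partialSums y := by
  funext i
  simp [partialSums, S_add]

lemma partialSums_offload (x : Fin N → ℕ) (L : ℕ) :
    partialSums (offload x L) = fun i => max (partialSums x i - L) 0 := by
  funext i
  simp only [partialSums, S_offload]
  omega

lemma partialSums_shift (x : Fin N → ℕ) (j : Fin N) :
    partialSums (shift x) j = partialSums x (succClamp j) - partialSums x ⟨0, j.pos⟩ := by
  have := S_mono x (show 1 ≤ min ((j : ℕ) + 1 + 1) N by omega)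
  simp only [partialSums, S_shift, succClamp, zero_add]
  rw [show min ((j : ℕ) + 1) (N - 1) + 1 = min ((j : ℕ) + 1 + 1) N by omega]
  omega

lemma partialSums_ofPartialSums {A : Fin N → ℤ} (hA : Monotone A) :
    partialSums (ofPartialSums A) = fun i => max (A i) 0 := by
  suffices h : ∀ n (hn : n < N), S (ofPartialSums A) (n + 1) = (A ⟨n, hn⟩).toNat by
    funext i
    simp only [partialSums, h i i.isLt, Fin.eta]
    omega
  intro n
  induction n with
  | zero =>
    intro hn
    rw [S_succ, dif_pos hn, S_zero]
    simp [ofPartialSums]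
  | succ n ih =>
    intro hn
    have hle : A ⟨n, by omega⟩ ≤ A ⟨n + 1, hn⟩ := hA (Fin.mk_le_mk.mpr n.le_succ)
    rw [S_succ, dif_pos hn, ih (by omega)]
    simp only [ofPartialSums, Nat.add_one_ne_zero, dite_false, Nat.add_sub_cancel]
    omega

lemma ofPartialSums_partialSums (x : Fin N → ℕ) : ofPartialSums (partialSums x) = x := by
  apply partialSums_injective
  rw [partialSums_ofPartialSums (partialSums_mono x)]
  funext i
  exact max_eq_left (partialSums_nonneg x i)

lemma eq_ofPartialSums {x : Fin N → ℕ} {A : Fin N → ℤ} (hA : Monotone A)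
    (h : ∀ i, partialSums x i = max (A i) 0) : x = ofPartialSums A :=
  partialSums_injective (by rw [partialSums_ofPartialSums hA]; exact funext h)

lemma offload_zero (x : Fin N → ℕ) : offload x 0 = x := by
  apply partialSums_injective
  rw [partialSums_offload]
  funext i
  simpa using partialSums_nonneg x i

lemma offload_eq_offload_tot {y : Fin N → ℕ} {M : ℕ} (hM : tot y ≤ M) :
    offload y M = offload y (tot y) := by
  apply partialSums_injective
  rw [partialSums_offload, partialSums_offload]
  funext i
  have : S y (i + 1) ≤ tot y := S_le_tot y _
  simp only [partialSums]
  omega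

lemma shift_offload (x : Fin N → ℕ) (L : ℕ) :
    shift (offload x L) = offload (shift x) (L - S x 1) := by
  apply partialSums_injective
  funext j
  have h0 : (S x 1 : ℤ) = partialSums x ⟨0, j.pos⟩ := rfl
  have hle := partialSums_mono x (show (⟨0, j.pos⟩ : Fin N) ≤ succClamp j from Nat.zero_le _)
  simp only [partialSums_shift, partialSums_offload]
  omega

lemma proc_eq_offload (z : Fin N → ℕ) : proc z = offload z 1 := by
  funext i
  have hS := S_succ_fin z i
  have hzero : (∀ j : Fin N, j < i → z j = 0) ↔ S z i = 0 := by
    simp only [S, sum_eq_zero_iff, mem_filter, mem_univ, true_and, Fin.lt_def]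
  simp only [proc, offload, hzero]
  split_ifs <;> omega

def shiftPS (C : Fin N → ℤ) : Fin N → ℤ := fun j => C (succClamp j) - C ⟨0, j.pos⟩

lemma shiftPS_mono {C : Fin N → ℤ} (hC : Monotone C) : Monotone (shiftPS C) :=
  fun i j h => sub_le_sub_right (hC (by rw [Fin.le_def] at h ⊢; simp only [succClamp]; omega)) _

lemma shiftPS_nonneg {C : Fin N → ℤ} (hC : Monotone C) (j : Fin N) : 0 ≤ shiftPS C j :=
  sub_nonneg.mpr (hC (Nat.zero_le _))

lemma offload_ofPartialSums {A : Fin N → ℤ} (hA : Monotone A) (M : ℕ) :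
    offload (ofPartialSums A) M = ofPartialSums (fun i => A i - M) := by
  refine eq_ofPartialSums (fun i j h => sub_le_sub_right (hA h) _) fun i => ?_
  simp only [partialSums_offload, partialSums_ofPartialSums hA]
  omega

lemma ofPartialSums_add {A : Fin N → ℤ} (hA : Monotone A) (y : Fin N → ℕ) :
    ofPartialSums A + y = ofPartialSums (fun i => max (A i) 0 + partialSums y i) := by
  refine eq_ofPartialSums (fun i j h => add_le_add (max_le_max_right 0 (hA h))
    (partialSums_mono y h)) fun i => ?_
  simp only [partialSums_add, Pi.add_apply, partialSums_ofPartialSums hA]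
  have := partialSums_nonneg y i
  omega

lemma shift_ofPartialSums {A : Fin N → ℤ} (hA : Monotone A) :
    shift (ofPartialSums A) = ofPartialSums (shiftPS fun i => max (A i) 0) := by
  refine eq_ofPartialSums (shiftPS_mono fun i j h => max_le_max_right 0 (hA h)) fun j => ?_
  rw [partialSums_shift, partialSums_ofPartialSums hA]
  exact (max_eq_left (shiftPS_nonneg (fun i j h => max_le_max_right 0 (hA h)) j)).symm

lemma S_one_ofPartialSums {A : Fin N → ℤ} (hA : Monotone A) (hN : 0 < N) :
    (S (ofPartialSums A) 1 : ℤ) = max (A ⟨0, hN⟩) 0 :=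
  congrFun (partialSums_ofPartialSums hA) ⟨0, hN⟩

/-! ### Discretely midpoint convex costs -/

def midUp (A B : Fin N → ℤ) : Fin N → ℤ := fun i => (A i + B i + 1) / 2

def midDown (A B : Fin N → ℤ) : Fin N → ℤ := fun i => (A i + B i) / 2

lemma Monotone.midUp {A B : Fin N → ℤ} (hA : Monotone A) (hB : Monotone B) :
    Monotone (midUp A B) :=
  fun i j h => Int.ediv_le_ediv two_pos (by linarith [hA h, hB h])

lemma Monotone.midDown {A B : Fin N → ℤ} (hA : Monotone A) (hB : Monotone B) :
    Monotone (midDown A B) :=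
  fun i j h => Int.ediv_le_ediv two_pos (by linarith [hA h, hB h])

/-- When `a + b` is odd, the rounded-up and rounded-down midpoints trade places. -/
lemma midUp_midDown_sub_const (g : (Fin N → ℤ) → ℝ) (A B : Fin N → ℤ) (a b : ℤ) :
    g (fun i => midUp A B i - (a + b + 1) / 2) + g (fun i => midDown A B i - (a + b) / 2) =
      g (midUp (fun i => A i - a) fun i => B i - b) +
        g (midDown (fun i => A i - a) fun i => B i - b) := by
  rcases Int.emod_two_eq_zero_or_one (a + b) with h | h
  · congr 2 <;> funext i <;> simp only [midUp, midDown] <;> omega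
  · rw [add_comm]
    congr 2 <;> funext i <;> simp only [midUp, midDown] <;> omega

/-- An L♮-convexity-type condition, imposed only on monotone vectors (partial sums of states). -/
structure IsRegularCost (c : ℝ) (g : (Fin N → ℤ) → ℝ) : Prop where
  mono : ∀ ⦃A B⦄, Monotone A → Monotone B → A ≤ B → g A ≤ g B
  add_const_le : ∀ ⦃A⦄, Monotone A → ∀ t : ℕ, g (fun i => A i + t) ≤ g A + c * t
  midpoint_le : ∀ ⦃A B⦄, Monotone A → Monotone B → g (midUp A B) + g (midDown A B) ≤ g A + g B

namespace IsRegularCost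

variable {c c' : ℝ} {g g' : (Fin N → ℤ) → ℝ} {φ : (Fin N → ℕ) → ℝ}

lemma congr (h : IsRegularCost c g) (hg : ∀ A, Monotone A → g' A = g A) :
    IsRegularCost c g' where
  mono A B hA hB hAB := by rw [hg A hA, hg B hB]; exact h.mono hA hB hAB
  add_const_le A hA t := by
    rw [hg _ (hA.add_const (t : ℤ)), hg A hA]; exact h.add_const_le hA t
  midpoint_le A B hA hB := by
    rw [hg _ (Monotone.midUp hA hB), hg _ (Monotone.midDown hA hB), hg A hA, hg B hB]
    exact h.midpoint_le hA hB

lemma of_le (h : IsRegularCost c g) (hc : c ≤ c') : IsRegularCost c' g where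
  mono := h.mono
  add_const_le A hA t :=
    (h.add_const_le hA t).trans (by gcongr)
  midpoint_le := h.midpoint_le

lemma zero : IsRegularCost (N := N) 0 fun _ => 0 where
  mono _ _ _ _ _ := le_rfl
  add_const_le _ _ _ := by simp
  midpoint_le _ _ _ _ := le_rfl

lemma add (h : IsRegularCost c g) (h' : IsRegularCost c' g') :
    IsRegularCost (c + c') fun A => g A + g' A where
  mono A B hA hB hAB := add_le_add (h.mono hA hB hAB) (h'.mono hA hB hAB)
  add_const_le A hA t := by linarith [h.add_const_le hA t, h'.add_const_le hA t]
  midpoint_le A B hA hB := by linarith [h.midpoint_le hA hB, h'.midpoint_le hA hB]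

lemma const_mul (h : IsRegularCost c g) {a : ℝ} (ha : 0 ≤ a) :
    IsRegularCost (a * c) fun A => a * g A where
  mono A B hA hB hAB := mul_le_mul_of_nonneg_left (h.mono hA hB hAB) ha
  add_const_le A hA t := by nlinarith [h.add_const_le hA t]
  midpoint_le A B hA hB := by nlinarith [h.midpoint_le hA hB]

lemma sum {ι : Type*} (s : Finset ι) {c : ι → ℝ} {g : ι → (Fin N → ℤ) → ℝ}
    (h : ∀ k ∈ s, IsRegularCost (c k) (g k)) :
    IsRegularCost (∑ k ∈ s, c k) fun A => ∑ k ∈ s, g k A := by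
  classical
  induction s using Finset.induction_on with
  | empty => simpa using zero
  | insert k s hk ih =>
    simp only [sum_insert hk]
    exact (h k (mem_insert_self k s)).add (ih fun j hj => h j (mem_insert_of_mem hj))

lemma comp_add (h : IsRegularCost c g) {v : Fin N → ℤ} (hv : Monotone v) :
    IsRegularCost c fun A => g fun i => A i + v i where
  mono A B hA hB hAB := h.mono (hA.add hv) (hB.add hv) fun i => add_le_add (hAB i) le_rfl
  add_const_le A hA t := by
    simpa only [add_right_comm] using h.add_const_le (Monotone.add hA hv) t
  midpoint_le A B hA hB := by
    have hAv : Monotone fun i => A i + v i := hA.add hv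
    have hBv : Monotone fun i => B i + v i := hB.add hv
    have hup : (fun i => midUp A B i + v i) = midUp (fun i => A i + v i) fun i => B i + v i := by
      funext i; simp only [midUp]; omega
    have hdown :
        (fun i => midDown A B i + v i) = midDown (fun i => A i + v i) fun i => B i + v i := by
      funext i; simp only [midDown]; omega
    simpa only [hup, hdown] using h.midpoint_le hAv hBv

lemma comp_max_zero (h : IsRegularCost c g) :
    IsRegularCost c fun A => g fun i => max (A i) 0 where
  mono A B hA hB hAB :=
    h.mono (hA.max monotone_const) (hB.max monotone_const) fun i => max_le_max_right 0 (hAB i)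
  add_const_le A hA t := by
    have hA' : Monotone fun i => max (A i) 0 := hA.max monotone_const
    refine (h.mono ((hA.add_const (t : ℤ)).max monotone_const) (hA'.add_const t)
      fun i => ?_).trans (h.add_const_le hA' t)
    simp only
    omega
  midpoint_le A B hA hB := by
    have hA' : Monotone fun i => max (A i) 0 := hA.max monotone_const
    have hB' : Monotone fun i => max (B i) 0 := hB.max monotone_const
    have hup : Monotone fun i => max (midUp A B i) 0 := (Monotone.midUp hA hB).max monotone_const
    have hdown : Monotone fun i => max (midDown A B i) 0 :=
      (Monotone.midDown hA hB).max monotone_const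
    have := h.mono hup (hA'.midUp hB') fun i => by simp only [midUp]; omega
    have := h.mono hdown (hA'.midDown hB') fun i => by simp only [midDown]; omega
    linarith [h.midpoint_le hA' hB']

lemma comp_offload (h : IsRegularCost c (φ ∘ ofPartialSums)) (m : ℕ) :
    IsRegularCost c ((fun x => φ (offload x m)) ∘ ofPartialSums) :=
  (h.comp_add (monotone_const (c := -(m : ℤ)))).congr fun A hA => by
    simp only [Function.comp_apply, offload_ofPartialSums hA, sub_eq_add_neg]

lemma comp_add_right (h : IsRegularCost c (φ ∘ ofPartialSums)) (y : Fin N → ℕ) :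
    IsRegularCost c ((fun x => φ (x + y)) ∘ ofPartialSums) :=
  (h.comp_add (partialSums_mono y)).comp_max_zero.congr fun A hA => by
    simp only [Function.comp_apply, ofPartialSums_add hA]

end IsRegularCost

noncomputable def offloadMin (Co : ℝ) (φ : (Fin N → ℕ) → ℝ) (y : Fin N → ℕ) : ℝ :=
  (range (tot y + 1)).inf' nonempty_range_add_one fun M => Co * M + φ (offload y M)

section offloadMin

variable {Co : ℝ} {φ : (Fin N → ℕ) → ℝ}

lemma offloadMin_le (hCo : 0 ≤ Co) (y : Fin N → ℕ) (M : ℕ) :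
    offloadMin Co φ y ≤ Co * M + φ (offload y M) := by
  rcases le_or_gt M (tot y) with hM | hM
  · exact inf'_le _ (mem_range.mpr (Nat.lt_succ_of_le hM))
  · refine (inf'_le _ (mem_range.mpr (Nat.lt_succ_self _))).trans ?_
    rw [offload_eq_offload_tot hM.le]
    gcongr

lemma exists_offloadMin_eq (y : Fin N → ℕ) :
    ∃ M ≤ tot y, offloadMin Co φ y = Co * M + φ (offload y M) := by
  obtain ⟨M, hM, hEq⟩ := exists_mem_eq_inf' (nonempty_range_add_one (n := tot y))
    fun M : ℕ => Co * M + φ (offload y M)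
  exact ⟨M, Nat.lt_succ_iff.mp (mem_range.mp hM), hEq⟩

lemma offloadMin_ofPartialSums_le (hCo : 0 ≤ Co) {A : Fin N → ℤ} (hA : Monotone A) (M : ℕ) :
    offloadMin Co φ (ofPartialSums A) ≤ Co * M + φ (ofPartialSums fun i => A i - M) := by
  rw [← offload_ofPartialSums hA]
  exact offloadMin_le hCo _ M

lemma exists_offloadMin_ofPartialSums_eq {A : Fin N → ℤ} (hA : Monotone A) :
    ∃ M : ℕ, offloadMin Co φ (ofPartialSums A) = Co * M + φ (ofPartialSums fun i => A i - M) := by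
  obtain ⟨M, -, hM⟩ := exists_offloadMin_eq (Co := Co) (φ := φ) (ofPartialSums A)
  exact ⟨M, by rw [hM, offload_ofPartialSums hA]⟩

end offloadMin

lemma IsRegularCost.offloadMin {c Co : ℝ} {φ : (Fin N → ℕ) → ℝ}
    (h : IsRegularCost c (φ ∘ ofPartialSums)) (hCo : 0 ≤ Co) :
    IsRegularCost Co (offloadMin Co φ ∘ ofPartialSums) where
  mono A B hA hB hAB := by
    obtain ⟨M, hM⟩ := exists_offloadMin_ofPartialSums_eq (Co := Co) (φ := φ) hB
    have := h.mono (hA.add_const (-(M : ℤ))) (hB.add_const (-(M : ℤ)))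
      fun i => add_le_add (hAB i) le_rfl
    simp only [Function.comp_apply, ← sub_eq_add_neg] at this ⊢
    linarith [offloadMin_ofPartialSums_le (φ := φ) hCo hA M]
  add_const_le A hA t := by
    obtain ⟨M, hM⟩ := exists_offloadMin_ofPartialSums_eq (Co := Co) (φ := φ) hA
    have := offloadMin_ofPartialSums_le (φ := φ) hCo (hA.add_const (t : ℤ)) (M + t)
    simp only [Function.comp_apply, Nat.cast_add, add_sub_add_right_eq_sub] at this ⊢
    linarith
  midpoint_le A B hA hB := by
    obtain ⟨m, hm⟩ := exists_offloadMin_ofPartialSums_eq (Co := Co) (φ := φ) hA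
    obtain ⟨n, hn⟩ := exists_offloadMin_ofPartialSums_eq (Co := Co) (φ := φ) hB
    have hup := offloadMin_ofPartialSums_le (φ := φ) hCo (hA.midUp hB) ((m + n + 1) / 2)
    have hdown := offloadMin_ofPartialSums_le (φ := φ) hCo (hA.midDown hB) ((m + n) / 2)
    have hsum : Co * ((m + n + 1) / 2 : ℕ) + Co * ((m + n) / 2 : ℕ) = Co * m + Co * n := by
      rw [← mul_add, ← mul_add, ← Nat.cast_add, ← Nat.cast_add]
      congr 2
      omega
    have hpair := midUp_midDown_sub_const (φ ∘ ofPartialSums) A B m n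
    have hmid := h.midpoint_le (hA.add_const (-(m : ℤ))) (hB.add_const (-(n : ℤ)))
    push_cast at hup hdown
    simp only [Function.comp_apply, ← sub_eq_add_neg] at *
    linarith

lemma IsRegularCost.comp_shiftPS (hN : 0 < N) {c : ℝ} {φ : (Fin N → ℕ) → ℝ}
    (h : IsRegularCost c (φ ∘ ofPartialSums)) :
    IsRegularCost c fun C => c * C ⟨0, hN⟩ + φ (ofPartialSums (shiftPS C)) where
  mono C D hC hD hCD := by
    have h0 : C ⟨0, hN⟩ ≤ D ⟨0, hN⟩ := hCD _
    set t := (D ⟨0, hN⟩ - C ⟨0, hN⟩).toNat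
    have ht : (t : ℝ) = D ⟨0, hN⟩ - C ⟨0, hN⟩ := by
      exact_mod_cast (show (t : ℤ) = D ⟨0, hN⟩ - C ⟨0, hN⟩ by omega)
    have hle := h.mono (shiftPS_mono hC) ((shiftPS_mono hD).add_const (t : ℤ)) fun j => by
      have : C (succClamp j) ≤ D (succClamp j) := hCD _
      simp only [shiftPS]
      omega
    have := h.add_const_le (shiftPS_mono hD) t
    simp only [Function.comp_apply] at hle this
    rw [ht] at this
    linarith
  add_const_le C hC t := by
    have hshift : shiftPS (fun i => C i + (t : ℤ)) = shiftPS C := by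
      funext j; simp only [shiftPS]; ring
    rw [hshift]
    push_cast
    linarith
  midpoint_le C D hC hD := by
    have hpair : φ (ofPartialSums (shiftPS (midUp C D))) +
        φ (ofPartialSums (shiftPS (midDown C D))) =
          φ (ofPartialSums (midUp (shiftPS C) (shiftPS D))) +
            φ (ofPartialSums (midDown (shiftPS C) (shiftPS D))) :=
      midUp_midDown_sub_const (φ ∘ ofPartialSums) (fun j => C (succClamp j))
        (fun j => D (succClamp j)) (C ⟨0, hN⟩) (D ⟨0, hN⟩)
    have hmid := h.midpoint_le (shiftPS_mono hC) (shiftPS_mono hD)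
    have hfirst : (midUp C D ⟨0, hN⟩ : ℝ) + midDown C D ⟨0, hN⟩ = C ⟨0, hN⟩ + D ⟨0, hN⟩ := by
      exact_mod_cast (show midUp C D ⟨0, hN⟩ + midDown C D ⟨0, hN⟩ = C ⟨0, hN⟩ + D ⟨0, hN⟩ by
        simp only [midUp, midDown]; omega)
    simp only [Function.comp_apply] at hmid
    linear_combination hmid + hpair + c * hfirst

lemma IsRegularCost.add_comp_shift (hN : 0 < N) {c : ℝ} {φ : (Fin N → ℕ) → ℝ}
    (h : IsRegularCost c (φ ∘ ofPartialSums)) :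
    IsRegularCost c ((fun x => c * S x 1 + φ (shift x)) ∘ ofPartialSums) :=
  (h.comp_shiftPS hN).comp_max_zero.congr fun A hA => by
    simp only [Function.comp_apply, shift_ofPartialSums hA]
    rw [← S_one_ofPartialSums hA hN]
    push_cast
    rfl

lemma tot_shift (x : Fin N → ℕ) : tot (shift x) = tot x - S x 1 := by
  rw [tot, S_shift, min_eq_right (Nat.le_succ N), tot]

/-! ### The dynamic program -/

section DynamicProgramming

variable (P : Params)

/-- Offloading fewer than `n₁` tasks is never better than offloading exactly `n₁`, since
`C_o ≤ C_p`; beyond `n₁` the minimization is `offloadMin` on the shifted state. -/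
lemma JofG_eq (hCo : 0 ≤ P.Co) (hCoCp : P.Co ≤ P.Cp) (hpa0 : 0 ≤ P.pa)
    {G : (Fin N → ℕ) → ℕ → ℝ} {φ : (Fin N → ℕ) → ℝ}
    (hG : ∀ v L, G v L = φ (shift (offload v L))) (x : Fin N → ℕ) :
    JofG P G x = ((1 - P.pa) * P.Cp + P.pa * P.Co) * S x 1 +
      ((1 - P.pa) * φ (shift x) + P.pa * offloadMin P.Co φ (shift x)) := by
  have hGL : ∀ L, G x L = φ (offload (shift x) (L - S x 1)) := fun L => by
    rw [hG, shift_offload]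
  have hG0 : G x 0 = φ (shift x) := by rw [hGL, Nat.zero_sub, offload_zero]
  have hterm : ∀ L, ((1 - P.pa) * P.Cp + P.pa * P.Co) * S x 1 +
      ((1 - P.pa) * φ (shift x) + P.pa * (P.Co * (L - S x 1 : ℕ) +
        φ (offload (shift x) (L - S x 1)))) ≤ cost P x L + P.pa * G x L + (1 - P.pa) * G x 0 := by
    intro L
    rw [hGL, hG0]
    simp only [cost, costA, costNA]
    rcases le_total (S x 1) L with hL | hL
    · rw [Nat.sub_eq_zero_of_le hL, Nat.cast_sub hL]
      push_cast
      linarith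
    · rw [Nat.sub_eq_zero_of_le hL, Nat.cast_sub hL]
      have : P.pa * (P.Co * ((S x 1 : ℝ) - L)) ≤ P.pa * (P.Cp * ((S x 1 : ℝ) - L)) := by
        gcongr
        exact sub_nonneg.mpr (by exact_mod_cast hL)
      push_cast
      nlinarith
  apply le_antisymm
  · obtain ⟨M, hM, hEq⟩ := exists_offloadMin_eq (Co := P.Co) (φ := φ) (shift x)
    have h1 := S_le_tot x 1
    rw [tot_shift] at hM
    refine (inf'_le _ (mem_range.mpr (show S x 1 + M < tot x + 1 by omega))).trans_eq ?_
    rw [hGL, hG0, hEq, Nat.add_sub_cancel_left]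
    simp only [cost, costA, costNA, Nat.sub_eq_zero_of_le (Nat.le_add_right _ _)]
    push_cast
    ring
  · refine le_inf' _ _ fun L _ => (le_trans ?_ (hterm L))
    gcongr
    exact offloadMin_le hCo _ _

noncomputable def expectedNext (J : (Fin N → ℕ) → ℝ) (y : Fin N → ℕ) : ℝ :=
  ∑ k ∈ range (N + 1), P.p k * (P.mu * J (proc (y + avec k)) + (1 - P.mu) * J (y + avec k))

/-- `G^A_T(s, L)` only depends on the post-decision state `shift (s̄_L)`. -/
noncomputable def postValue : ℕ → (Fin N → ℕ) → ℝ
  | 0, _ => 0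
  | T + 1, y => expectedNext P (JofG P (GA P T)) y

lemma GA_eq_postValue (T : ℕ) (v : Fin N → ℕ) (L : ℕ) :
    GA P T v L = postValue P T (shift (offload v L)) := by
  cases T with
  | zero => rfl
  | succ T =>
    simp only [GA, postValue, expectedNext, mul_sum, ← sum_add_distrib]
    refine sum_congr rfl fun k _ => ?_
    change _ = P.p k * (P.mu * JofG P (GA P T) (sd v L k) +
      (1 - P.mu) * JofG P (GA P T) (sdd v L k))
    ring

variable {P}

lemma IsRegularCost.expectedNext {c : ℝ} {J : (Fin N → ℕ) → ℝ}
    (h : IsRegularCost c (J ∘ ofPartialSums)) (hmu0 : 0 ≤ P.mu) (hmu1 : P.mu ≤ 1)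
    (hp : ∀ k ≤ N, 0 ≤ P.p k) (hpsum : ∑ k ∈ range (N + 1), P.p k = 1) :
    IsRegularCost c (expectedNext P J ∘ ofPartialSums) := by
  have hproc : IsRegularCost c ((J ∘ proc) ∘ ofPartialSums) :=
    (h.comp_offload 1).congr fun A _ => by simp only [Function.comp_apply, proc_eq_offload]
  have hterm : ∀ k ∈ range (N + 1), IsRegularCost (P.p k * (P.mu * c + (1 - P.mu) * c))
      fun A => P.p k * (P.mu * J (proc (ofPartialSums A + avec k)) +
        (1 - P.mu) * J (ofPartialSums A + avec k)) := fun k hk =>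
    (((hproc.comp_add_right (avec k)).const_mul hmu0).add
      ((h.comp_add_right (avec k)).const_mul (sub_nonneg.mpr hmu1))).const_mul
      (hp k (Nat.lt_succ_iff.mp (mem_range.mp hk)))
  have hc : ∑ k ∈ range (N + 1), P.p k * (P.mu * c + (1 - P.mu) * c) = c := by
    rw [← sum_mul, hpsum]
    ring
  exact hc ▸ IsRegularCost.sum _ hterm

end DynamicProgramming

lemma isRegularCost_postValue {P : Params} (hN : 0 < N) (hCo : 0 ≤ P.Co) (hCoCp : P.Co ≤ P.Cp)
    (hpa0 : 0 ≤ P.pa) (hpa1 : P.pa ≤ 1) (hmu0 : 0 ≤ P.mu) (hmu1 : P.mu ≤ 1)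
    (hp : ∀ k ≤ N, 0 ≤ P.p k) (hpsum : ∑ k ∈ range (N + 1), P.p k = 1) :
    ∀ T, IsRegularCost P.Cp (postValue (N := N) P T ∘ ofPartialSums)
  | 0 => (IsRegularCost.zero.of_le (hCo.trans hCoCp)).congr fun _ _ => rfl
  | T + 1 => by
    have ih := isRegularCost_postValue hN hCo hCoCp hpa0 hpa1 hmu0 hmu1 hp hpsum T
    have hcCp : (1 - P.pa) * P.Cp + P.pa * P.Co ≤ P.Cp := by nlinarith
    have hnext : IsRegularCost ((1 - P.pa) * P.Cp + P.pa * P.Co)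
        ((fun y => (1 - P.pa) * postValue P T y + P.pa * offloadMin P.Co (postValue P T) y) ∘
          ofPartialSums) :=
      (ih.const_mul (sub_nonneg.mpr hpa1)).add ((ih.offloadMin hCo).const_mul hpa0)
    have hJ : IsRegularCost ((1 - P.pa) * P.Cp + P.pa * P.Co) (JofG P (GA P T) ∘ ofPartialSums) :=
      (hnext.add_comp_shift hN).congr fun A _ => by
        simp only [Function.comp_apply, JofG_eq P hCo hCoCp hpa0 (GA_eq_postValue P T)]
    exact (hJ.expectedNext hmu0 hmu1 hp hpsum).of_le hcCp

lemma IsRegularCost.offload_convex {c : ℝ} {φ : (Fin N → ℕ) → ℝ}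
    (h : IsRegularCost c (φ ∘ ofPartialSums)) (y : Fin N → ℕ) (m : ℕ) :
    2 * φ (offload y (m + 1)) ≤ φ (offload y m) + φ (offload y (m + 2)) := by
  have hy := partialSums_mono y
  have hoff : ∀ k : ℕ, offload y k = ofPartialSums fun i => partialSums y i - k := fun k => by
    rw [← offload_ofPartialSums hy, ofPartialSums_partialSums]
  have hup : midUp (fun i => partialSums y i - m) (fun i => partialSums y i - (m + 2 : ℕ)) =
      fun i => partialSums y i - (m + 1 : ℕ) := by
    funext i; simp only [midUp]; omega
  have hdown : midDown (fun i => partialSums y i - m) (fun i => partialSums y i - (m + 2 : ℕ)) =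
      fun i => partialSums y i - (m + 1 : ℕ) := by
    funext i; simp only [midDown]; omega
  have := h.midpoint_le (hy.add_const (-(m : ℤ))) (hy.add_const (-((m + 2 : ℕ) : ℤ)))
  simp only [← sub_eq_add_neg, hup, hdown, Function.comp_apply, ← hoff] at this
  linarith

theorem F_discrete_convex_general {N : ℕ} (hN : 1 ≤ N)
    (P : Params) (hCo : 0 < P.Co) (hCoCp : P.Co < P.Cp)
    (hpa0 : 0 ≤ P.pa) (hpa1 : P.pa ≤ 1) (hmu0 : 0 ≤ P.mu) (hmu1 : P.mu ≤ 1)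
    (hp : ∀ k ≤ N, 0 ≤ P.p k) (hpsum : ∑ k ∈ Finset.range (N + 1), P.p k = 1)
    (T : ℕ) (s : Fin N → ℕ) (L : ℕ)
    (hL1 : S s 1 ≤ L) :
    F P T s L + F P T s (L + 2) ≥ 2 * F P T s (L + 1) := by
  have hF : ∀ m, F P T s (S s 1 + m) =
      postValue P (T - 1) (offload (shift s) m) + ((S s 1 + m : ℕ) : ℝ) * P.Co := fun m => by
    rw [F, JNA, costNA, GA_eq_postValue, offload_zero, shift_offload, S_offload,
      Nat.add_sub_cancel_left, Nat.sub_eq_zero_of_le (Nat.le_add_right _ _)]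
    simp
  obtain ⟨m, rfl⟩ := Nat.exists_eq_add_of_le hL1
  have hconvex := (isRegularCost_postValue hN hCo.le hCoCp.le hpa0 hpa1 hmu0 hmu1 hp hpsum
    (T - 1)).offload_convex (shift s) m
  rw [add_assoc, add_assoc, hF, hF, hF]
  push_cast
  linarith

/-- discrete convexity of F(s,·) on {n_1, …, |s|}. -/
theorem F_discrete_convex {N : ℕ} (hN : 1 ≤ N)
    (P : Params) (hCo : 0 < P.Co) (hCoCp : P.Co < P.Cp)
    (hpa0 : 0 ≤ P.pa) (hpa1 : P.pa ≤ 1) (hmu0 : 0 ≤ P.mu) (hmu1 : P.mu ≤ 1)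
    (hp : ∀ k ≤ N, 0 ≤ P.p k) (hpsum : ∑ k ∈ Finset.range (N + 1), P.p k = 1)
    (T : ℕ) (hT : 1 ≤ T) (s : Fin N → ℕ) (L : ℕ)
    (hL1 : S s 1 ≤ L) (hL2 : L + 2 ≤ tot s) :
    F P T s L + F P T s (L + 2) ≥ 2 * F P T s (L + 1) :=
  F_discrete_convex_general hN P hCo hCoCp hpa0 hpa1 hmu0 hmu1 hp hpsum T s L hL1
end

section
/- Let T ≥ 1 be a horizon, s a state, and s^a a state adjacent to s. If the optimal offloading decision of s^a satisfies L*_T(s^a) ≥ 1, then the optimal offloading decision of s is L*_T(s) = L*_T(s^a) − 1. -/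
open Finset

variable {N : ℕ}

section AuxAdj

variable {N : ℕ}

lemma S_avec_aux (j0 : ℕ) (h1 : 1 ≤ j0) (hjN : j0 ≤ N) (j : ℕ) :
    S (avec j0 : Fin N → ℕ) j = if j0 ≤ j then 1 else 0 := by
  classical
  unfold S
  have hi0 : j0 - 1 < N := by omega
  have key : ∀ i : Fin N, avec j0 i = if i = (⟨j0 - 1, hi0⟩ : Fin N) then 1 else 0 := by
    intro i
    simp only [avec, Fin.ext_iff, Fin.val_mk]
    by_cases h : (i : ℕ) + 1 = j0
    · rw [if_pos h, if_pos (by omega)]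
    · rw [if_neg h, if_neg (by omega)]
  rw [Finset.sum_congr rfl fun i _ => key i, Finset.sum_ite_eq']
  simp only [Finset.mem_filter, Finset.mem_univ, true_and, Fin.val_mk]
  split_ifs with h h' h' <;> omega

lemma S_add_avec (s : Fin N → ℕ) (j0 : ℕ) (h1 : 1 ≤ j0) (hjN : j0 ≤ N) (j : ℕ) :
    S (s + avec j0) j = S s j + if j0 ≤ j then 1 else 0 := by
  rw [← S_avec_aux j0 h1 hjN j]
  unfold S
  simp only [Pi.add_apply, Finset.sum_add_distrib]

lemma S_sub_succ (s : Fin N → ℕ) (j0 : ℕ) (h1 : 1 ≤ j0) (hjN : j0 ≤ N)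
    (hz : ∀ j < j0, S s j = 0) (j L : ℕ) :
    S (s + avec j0) j - (L + 1) = S s j - L := by
  rw [S_add_avec s j0 h1 hjN j]
  by_cases h : j0 ≤ j
  · rw [if_pos h]; omega
  · rw [if_neg h, hz j (by omega)]
    omega

lemma offload_succ_eq (s : Fin N → ℕ) (j0 : ℕ) (h1 : 1 ≤ j0) (hjN : j0 ≤ N)
    (hz : ∀ j < j0, S s j = 0) (L : ℕ) :
    offload (s + avec j0) (L + 1) = offload s L := by
  funext i
  unfold offload
  rw [S_sub_succ s j0 h1 hjN hz, S_sub_succ s j0 h1 hjN hz]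

lemma GA_succ_eq (P : Params) (s : Fin N → ℕ) (j0 : ℕ) (h1 : 1 ≤ j0) (hjN : j0 ≤ N)
    (hz : ∀ j < j0, S s j = 0) (L : ℕ) (t : ℕ) :
    GA P t (s + avec j0) (L + 1) = GA P t s L := by
  cases t with
  | zero => rfl
  | succ t =>
    have hsdd : ∀ k, sdd (s + avec j0) (L + 1) k = sdd s L k := by
      intro k
      unfold sdd
      rw [offload_succ_eq s j0 h1 hjN hz]
    have hsd : ∀ k, sd (s + avec j0) (L + 1) k = sd s L k := by
      intro k
      unfold sd
      rw [hsdd k]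
    simp only [GA, hsd, hsdd]

lemma costA_succ_eq (P : Params) (s : Fin N → ℕ) (j0 : ℕ) (h1 : 1 ≤ j0) (hjN : j0 ≤ N)
    (hz : ∀ j < j0, S s j = 0) (L : ℕ) :
    costA P (s + avec j0) (L + 1) = costA P s L + P.Co := by
  unfold costA
  rw [S_sub_succ s j0 h1 hjN hz]
  push_cast
  ring

lemma JA_succ_eq (P : Params) (T : ℕ) (s : Fin N → ℕ) (j0 : ℕ) (h1 : 1 ≤ j0) (hjN : j0 ≤ N)
    (hz : ∀ j < j0, S s j = 0) (L : ℕ) :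
    JA P T (s + avec j0) (L + 1) = JA P T s L + P.Co := by
  unfold JA
  rw [costA_succ_eq P s j0 h1 hjN hz, GA_succ_eq P s j0 h1 hjN hz]
  ring

lemma tot_add_avec (s : Fin N → ℕ) (j0 : ℕ) (h1 : 1 ≤ j0) (hjN : j0 ≤ N) :
    tot (s + avec j0) = tot s + 1 := by
  unfold tot
  rw [S_add_avec s j0 h1 hjN, if_pos hjN]

end AuxAdj

/-- if s^a is adjacent to s and L*_T(s^a) ≥ 1 then
L*_T(s) = L*_T(s^a) − 1. -/
theorem Lstar_adjacent_pos {N : ℕ} (hN : 1 ≤ N)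
    (P : Params) (hCo : 0 < P.Co) (hCoCp : P.Co < P.Cp)
    (hpa0 : 0 ≤ P.pa) (hpa1 : P.pa ≤ 1) (hmu0 : 0 ≤ P.mu) (hmu1 : P.mu ≤ 1)
    (hp : ∀ k ≤ N, 0 ≤ P.p k) (hpsum : ∑ k ∈ Finset.range (N + 1), P.p k = 1)
    (T : ℕ) (hT : 1 ≤ T) (s sa : Fin N → ℕ) (hadj : Adjacent s sa)
    (h1 : 1 ≤ Lstar P T sa) :
    Lstar P T s = Lstar P T sa - 1 := by
  classical
  -- Unpack adjacency into a uniform form.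
  obtain ⟨j0, hj1, hjN, hz, hsa⟩ :
      ∃ j0, 1 ≤ j0 ∧ j0 ≤ N ∧ (∀ j < j0, S s j = 0) ∧ sa = s + avec j0 := by
    rcases hadj with ⟨hs0, j, hj1, hjd, hsa⟩ | ⟨hs0, j, hj1, hjN', hsa⟩
    · have hSN : 0 < S s N := by
        have hfil : Finset.univ.filter (fun i : Fin N => (i : ℕ) < N) = Finset.univ := by
          ext i; simp [i.isLt]
        rw [S, hfil]
        obtain ⟨i, hi⟩ := Function.ne_iff.mp hs0
        exact Finset.sum_pos' (fun _ _ => Nat.zero_le _)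
          ⟨i, Finset.mem_univ i, Nat.pos_of_ne_zero hi⟩
      have hdN : dmin s ≤ N := Nat.sInf_le hSN
      refine ⟨j, hj1, by omega, ?_, hsa⟩
      intro i hi
      by_contra h
      have : dmin s ≤ i := Nat.sInf_le (by omega : 0 < S s i)
      omega
    · refine ⟨j, hj1, hjN', ?_, ?_⟩
      · intro i _
        rw [hs0]
        simp [S]
      · rw [hsa, hs0]
        funext i
        simp
  subst hsa
  have hJA : ∀ L, JA P T (s + avec j0) (L + 1) = JA P T s L + P.Co :=
    JA_succ_eq P T s j0 hj1 hjN hz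
  have htot : tot (s + avec j0) = tot s + 1 := tot_add_avec s j0 hj1 hjN
  set A : Set ℕ := {L | L ≤ tot s ∧ ∀ L' ≤ tot s, JA P T s L ≤ JA P T s L'} with hA
  set B : Set ℕ :=
    {L | L ≤ tot (s + avec j0) ∧
      ∀ L' ≤ tot (s + avec j0), JA P T (s + avec j0) L ≤ JA P T (s + avec j0) L'} with hB
  have hLs : Lstar P T s = sInf A := rfl
  have hLsa : Lstar P T (s + avec j0) = sInf B := rfl
  -- B is nonempty
  have hBne : B.Nonempty := by
    obtain ⟨m, hm, hmin⟩ := Finset.exists_min_image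
      (Finset.range (tot (s + avec j0) + 1)) (JA P T (s + avec j0))
      ⟨0, Finset.mem_range.mpr (Nat.succ_pos _)⟩
    refine ⟨m, Nat.lt_succ_iff.mp (Finset.mem_range.mp hm), fun L' hL' => ?_⟩
    exact hmin L' (Finset.mem_range.mpr (Nat.lt_succ_of_le hL'))
  have hmB : sInf B ∈ B := Nat.sInf_mem hBne
  set m := sInf B with hm
  rw [hLsa] at h1
  obtain ⟨hmle, hmmin⟩ := hmB
  -- m - 1 ∈ A
  have hm1A : m - 1 ∈ A := by
    constructor
    · omega
    · intro L' hL'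
      have e1 : JA P T (s + avec j0) m = JA P T s (m - 1) + P.Co := by
        have := hJA (m - 1)
        rwa [Nat.sub_add_cancel h1] at this
      have e2 := hJA L'
      have h3 : JA P T (s + avec j0) m ≤ JA P T (s + avec j0) (L' + 1) :=
        hmmin (L' + 1) (by omega)
      rw [e1, e2] at h3
      linarith
  -- every a ∈ A gives a + 1 ∈ B
  have hAB : ∀ a ∈ A, a + 1 ∈ B := by
    rintro a ⟨hale, hamin⟩
    constructor
    · omega
    · intro L' hL'
      rw [hJA a]
      rcases Nat.eq_zero_or_pos L' with h0 | hpos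
      · subst h0
        have h4 : JA P T (s + avec j0) m ≤ JA P T (s + avec j0) 0 := hmmin 0 (by omega)
        have e1 : JA P T (s + avec j0) m = JA P T s (m - 1) + P.Co := by
          have := hJA (m - 1)
          rwa [Nat.sub_add_cancel h1] at this
        rw [e1] at h4
        have h5 : JA P T s a ≤ JA P T s (m - 1) := hamin (m - 1) (by omega)
        linarith
      · have e2 : JA P T (s + avec j0) L' = JA P T s (L' - 1) + P.Co := by
          have := hJA (L' - 1)
          rwa [Nat.sub_add_cancel hpos] at this
        rw [e2]
        have h5 : JA P T s a ≤ JA P T s (L' - 1) := hamin (L' - 1) (by omega)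
        linarith
  have hAne : A.Nonempty := ⟨m - 1, hm1A⟩
  have haA : sInf A ∈ A := Nat.sInf_mem hAne
  have h6 : sInf A ≤ m - 1 := Nat.sInf_le hm1A
  have h7 : m ≤ sInf A + 1 := Nat.sInf_le (hAB _ haA)
  rw [hLs, hLsa]
  omega
end
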